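/- Cassini's identity for bicomplex k-Fibonacci quaternions: Q_{k,n−1}·Q_{k,n+1} − Q_{k,n}² = (−1)^n·(2(k²+2)·j + (k³+2k)·ij) for all n ≥ 1. -/

import Mathlib

open TensorProduct

noncomputable def kFib (k : ℝ) : ℕ → ℝ
  | 0 => 0
  | 1 => 1
  | n + 2 => k * kFib k (n + 1) + kFib k n

abbrev Bicomplex : Type := ℂ ⊗[ℝ] ℂ

noncomputable def bi : Bicomplex := (Complex.I : ℂ) ⊗ₜ[ℝ] (1 : ℂ)
noncomputable def bj : Bicomplex := (1 : ℂ) ⊗ₜ[ℝ] (Complex.I : ℂ)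

noncomputable def Q (k : ℝ) (n : ℕ) : Bicomplex :=
  algebraMap ℝ Bicomplex (kFib k n) + kFib k (n + 1) • bi
    + kFib k (n + 2) • bj + kFib k (n + 3) • (bi * bj)

/-! `Q k` satisfies the `k`-Fibonacci recurrence in the commutative ring `ℂ ⊗[ℝ] ℂ`, and for any
sequence with `u (n + 2) = c * u (n + 1) + u n` the Cassini expression `u n * u (n + 2) - u (n + 1) ^ 2`
only changes sign from one `n` to the next. So it suffices to compute it at `n = 0`, using `i² = j² = -1`. -/

theorem cassini_of_add_two_eq {R : Type*} [CommRing R] (c : R) (u : ℕ → R)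
    (hu : ∀ n, u (n + 2) = c * u (n + 1) + u n) (n : ℕ) :
    u n * u (n + 2) - u (n + 1) ^ 2 = (-1) ^ n * (u 0 * u 2 - u 1 ^ 2) := by
  induction n with
  | zero => ring
  | succ n ih => linear_combination u (n + 1) * hu (n + 1) - u (n + 2) * hu n - ih

lemma kFib_add_two (k : ℝ) (n : ℕ) : kFib k (n + 2) = k * kFib k (n + 1) + kFib k n := rfl

-- The `ℝ`-action on `ℂ ⊗[ℝ] ℂ` is the tensor-product module structure, which `Algebra.smul_def`
-- does not match syntactically.
lemma Bicomplex.smul_eq_algebraMap_mul (r : ℝ) (x : Bicomplex) : r • x = algebraMap ℝ Bicomplex r * x :=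
  Algebra.smul_def r x

lemma bi_mul_self : bi * bi = -1 := by
  rw [bi, Algebra.TensorProduct.tmul_mul_tmul, Complex.I_mul_I, mul_one, TensorProduct.neg_tmul,
    ← Algebra.TensorProduct.one_def]

lemma bj_mul_self : bj * bj = -1 := by
  rw [bj, Algebra.TensorProduct.tmul_mul_tmul, Complex.I_mul_I, mul_one, TensorProduct.tmul_neg,
    ← Algebra.TensorProduct.one_def]

lemma Q_add_two (k : ℝ) (n : ℕ) :
    Q k (n + 2) = algebraMap ℝ Bicomplex k * Q k (n + 1) + Q k n := by
  simp only [Q, Bicomplex.smul_eq_algebraMap_mul, kFib_add_two k (n + 1), kFib_add_two k (n + 2),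
    kFib_add_two k (n + 3), kFib_add_two k n, map_add, map_mul]
  ring

lemma Q_zero_mul_Q_two_sub_Q_one_sq (k : ℝ) :
    Q k 0 * Q k 2 - Q k 1 ^ 2 = -((2 * (k ^ 2 + 2)) • bj + (k ^ 3 + 2 * k) • (bi * bj)) := by
  simp only [Q, Bicomplex.smul_eq_algebraMap_mul, kFib, map_add, map_mul, map_pow,
    map_ofNat, map_one, map_zero]
  set c := algebraMap ℝ Bicomplex k
  linear_combination (1 + (c ^ 2 + 2) * bj + bj * bj) * bi_mul_self + (-(c * bi) - 2) * bj_mul_self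

theorem stmt19_general (k : ℝ) (n : ℕ) (hn : 1 ≤ n) :
    Q k (n - 1) * Q k (n + 1) - Q k n ^ 2 =
      ((-1 : ℝ) ^ n) • ((2 * (k ^ 2 + 2)) • bj + (k ^ 3 + 2 * k) • (bi * bj)) := by
  obtain ⟨m, rfl⟩ := Nat.exists_eq_add_of_le' hn
  rw [Nat.add_sub_cancel, cassini_of_add_two_eq _ (Q k) (Q_add_two k) m,
    Q_zero_mul_Q_two_sub_Q_one_sq, Bicomplex.smul_eq_algebraMap_mul (_ ^ _), map_pow, map_neg, map_one]
  ring

theorem stmt19 (k : ℝ) (hk : 0 < k) (n : ℕ) (hn : 1 ≤ n) :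
    Q k (n - 1) * Q k (n + 1) - Q k n ^ 2 =
      ((-1 : ℝ) ^ n) • ((2 * (k ^ 2 + 2)) • bj + (k ^ 3 + 2 * k) • (bi * bj)) :=
  stmt19_general k n hn
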